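/- Let n ≥ 3 and P = ℚ[X₁,…,X_{2n}]. Let 𝔟⁻ be the ideal of P generated by all Xᵢ² (i = 1,…,2n) and all e_{n−1}(Xᵢ : i ∈ T) for subsets T ⊆ {2,…,2n} with |T| = n, where e_{n−1} is the elementary symmetric polynomial of degree n−1. Then for every a₁,…,a_{2n} ∈ ℚ, one has (a₁X₁ + ⋯ + a_{2n}X_{2n})^{n−1} ∈ 𝔟⁻ if and only if a₁ · ∏_{k∈K} a_k = 0 for every subset K ⊆ {2,…,2n} with |K| = n−2. -/

import Mathlib

/-!
Expand `(∑ aᵢ Xᵢ)^k`, `k = n - 1`, into monomials. Monomials containing a square lie in `𝔟⁻`. A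
square-free monomial `X^S` of degree `k` avoiding `X₁` lies in `𝔟⁻` too: with `W = {2,…,2n}` and
`L_r` the sum of the `X^J` with `J ⊆ W`, `|J| = k`, `|S \ J| = r`, double counting gives
`∑_{T ⊆ W, |T| = k+1, |S \ T| = r} e_k(T) = (|W \ S| - r) L_r + (r + 1) L_{r+1}`, and since
`|W \ S| > k` this triangular system can be solved downwards from `L_{k+1} = 0` to `L_0 = X^S`.
Conversely, no monomial of a generator of `𝔟⁻` divides `X₁ X^K` for `K ⊆ W`, `|K| = k - 1`
(a monomial of `e_k(T)` would need `k` variables of `T` among `K`), so the coefficient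
`k! a₁ ∏_K a` of that monomial in `(∑ aᵢ Xᵢ)^k` must vanish.
-/

open MvPolynomial Finset

noncomputable section

/-- e_j(Xᵢ : i ∈ I), the elementary symmetric polynomial in the variables indexed by I. -/
def esF {N : ℕ} (I : Finset (Fin N)) (j : ℕ) : MvPolynomial (Fin N) ℚ :=
  ∑ J ∈ powersetCard j I, ∏ i ∈ J, X i

namespace Finset

variable {α : Type*} [DecidableEq α]

theorem sum_powersetCard_succ_sum_powersetCard {β : Type*} [AddCommMonoid β] (W : Finset α)
    (k : ℕ) (F : Finset α → Finset α → β) :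
    ∑ T ∈ powersetCard (k + 1) W, ∑ J ∈ powersetCard k T, F T J =
      ∑ J ∈ powersetCard k W, ∑ j ∈ W \ J, F (insert j J) J := by
  have hcomm : ∀ T J, T ∈ powersetCard (k + 1) W ∧ J ∈ powersetCard k T ↔
      T ∈ (W \ J).image (insert · J) ∧ J ∈ powersetCard k W := by
    intro T J
    simp only [mem_powersetCard, mem_image, mem_sdiff]
    constructor
    · rintro ⟨⟨hTW, hT⟩, hJT, hJ⟩
      obtain ⟨j, hjJ, rfl⟩ := exists_eq_insert_iff.2 ⟨hJT, by rw [hJ, hT]⟩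
      exact ⟨⟨j, ⟨hTW (mem_insert_self j J), hjJ⟩, rfl⟩, (subset_insert j J).trans hTW, hJ⟩
    · rintro ⟨⟨j, ⟨hjW, hjJ⟩, rfl⟩, hJW, hJ⟩
      exact ⟨⟨insert_subset hjW hJW, by rw [card_insert_of_notMem hjJ, hJ]⟩, subset_insert j J, hJ⟩
  rw [sum_comm' hcomm]
  refine sum_congr rfl fun J _ => sum_image fun i hi j _ hij => ?_
  simpa [(mem_sdiff.1 hi).2] using congrArg (i ∈ ·) hij

theorem card_filter_card_sdiff_insert_eq {W S J : Finset α} (hSW : S ⊆ W) (hJW : J ⊆ W)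
    (hJS : #J = #S) (i : ℕ) :
    #{j ∈ W \ J | #(S \ insert j J) = i} =
      (if #(S \ J) = i then #(W \ S) - i else 0) + (if #(S \ J) = i + 1 then i + 1 else 0) := by
  have hsplit : W \ J = (W \ S) \ J ∪ S \ J := by
    ext j; by_cases j ∈ S <;> simp_all [hSW _]
  have hout : {j ∈ (W \ S) \ J | #(S \ insert j J) = i} =
      if #(S \ J) = i then (W \ S) \ J else ∅ := by
    rw [← filter_const]
    refine filter_congr fun j hj => ?_
    rw [sdiff_insert_of_notMem (mem_sdiff.1 (mem_sdiff.1 hj).1).2]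
  have hin : {j ∈ S \ J | #(S \ insert j J) = i} =
      if #(S \ J) = i + 1 then S \ J else ∅ := by
    rw [← filter_const]
    refine filter_congr fun j hj => ?_
    have := card_pos.2 ⟨j, hj⟩
    rw [sdiff_insert, card_erase_of_mem hj]
    omega
  have hcard : #((W \ S) \ J) = #(W \ S) - #(S \ J) := by
    rw [card_sdiff, ← card_sdiff_comm hJS, inter_comm, sdiff_inter_right_comm,
      inter_eq_right.2 hJW]
  rw [hsplit, filter_union, card_union_of_disjoint, hout, hin, apply_ite card, apply_ite card,
    card_empty, hcard]
  · split_ifs <;> omega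
  · exact disjoint_filter_filter (Disjoint.mono sdiff_subset sdiff_subset disjoint_sdiff_self_left)

def sqfreeExp (S : Finset α) : α →₀ ℕ := ∑ i ∈ S, Finsupp.single i 1

theorem sqfreeExp_apply (S : Finset α) (i : α) : S.sqfreeExp i = if i ∈ S then 1 else 0 := by
  simp [sqfreeExp, Finsupp.single_apply]

theorem support_sqfreeExp (S : Finset α) : S.sqfreeExp.support = S := by
  ext i; simp [sqfreeExp_apply]

theorem sqfreeExp_le_sqfreeExp_iff {S T : Finset α} : S.sqfreeExp ≤ T.sqfreeExp ↔ S ⊆ T := by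
  refine ⟨fun h => by simpa only [support_sqfreeExp] using Finsupp.support_mono h, fun h i => ?_⟩
  by_cases hi : i ∈ S <;> simp [sqfreeExp_apply, hi, h _]

theorem sum_sqfreeExp (S : Finset α) : S.sqfreeExp.sum (fun _ m => m) = #S := by
  simp [Finsupp.sum, support_sqfreeExp, sqfreeExp_apply]

theorem prod_sqfreeExp {M : Type*} [CommMonoid M] (S : Finset α) (a : α → M) :
    S.sqfreeExp.prod (fun i m => a i ^ m) = ∏ i ∈ S, a i := by
  simp +contextual [Finsupp.prod, support_sqfreeExp, sqfreeExp_apply]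

theorem sqfreeExp_support_of_le_one {e : α →₀ ℕ} (he : ∀ i, e i ≤ 1) : e.support.sqfreeExp = e := by
  ext i
  have := he i
  by_cases h0 : e i = 0 <;> simp [sqfreeExp_apply, h0]
  omega

end Finset

namespace MvPolynomial

variable {σ R : Type*} [CommSemiring R]

theorem monomial_sqfreeExp [DecidableEq σ] (S : Finset σ) :
    monomial S.sqfreeExp (1 : R) = ∏ i ∈ S, X i :=
  monomial_sum_one S _

theorem coeff_sqfreeExp_sum_C_mul_X_pow [Fintype σ] [DecidableEq σ] (a : σ → R)
    (S : Finset σ) (k : ℕ) :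
    coeff S.sqfreeExp ((∑ i, C (a i) * X i) ^ k) =
      if #S = k then S.sqfreeExp.multinomial * ∏ i ∈ S, a i else 0 := by
  simp only [← smul_eq_C_mul, coeff_linearCombination_X_pow_of_fintype, sum_sqfreeExp,
    prod_sqfreeExp]

theorem coeff_eq_zero_of_mem_ideal_span {G : Set (MvPolynomial σ R)} {d : σ →₀ ℕ}
    (hG : ∀ g ∈ G, ∀ e ∈ g.support, ¬e ≤ d) {p : MvPolynomial σ R} (hp : p ∈ Ideal.span G) :
    coeff d p = 0 := by
  have hle : Ideal.span G ≤ Ideal.span ((fun e => monomial e (1 : R)) '' {e | ¬e ≤ d}) :=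
    Ideal.span_le.2 fun g hg => mem_ideal_span_monomial_image.2 fun e he =>
      ⟨e, hG g hg e he, le_rfl⟩
  by_contra h
  obtain ⟨e, he, hed⟩ := mem_ideal_span_monomial_image.1 (hle hp) d (mem_support_iff.2 h)
  exact he hed

theorem monomial_mem_of_le {I : Ideal (MvPolynomial σ R)} {e e' : σ →₀ ℕ}
    (h : monomial e' (1 : R) ∈ I) (hle : e' ≤ e) (c : R) : monomial e c ∈ I := by
  rw [← tsub_add_cancel_of_le hle, ← mul_one c, ← monomial_mul]
  exact I.mul_mem_left _ h

end MvPolynomial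

section ElementarySymmetric

variable {N : ℕ}

theorem exists_eq_sqfreeExp_of_mem_support_esF {T : Finset (Fin N)} {j : ℕ} {e : Fin N →₀ ℕ}
    (he : e ∈ (esF T j).support) : ∃ J ∈ powersetCard j T, e = J.sqfreeExp := by
  simp only [esF, ← monomial_sqfreeExp] at he
  obtain ⟨J, hJ, he⟩ := mem_biUnion.1 (support_sum he)
  exact ⟨J, hJ, mem_singleton.1 (support_monomial_subset he)⟩

theorem not_le_sqfreeExp_of_mem_support_esF {T S : Finset (Fin N)} {j : ℕ} (hTS : #(T ∩ S) < j)
    {e : Fin N →₀ ℕ} (he : e ∈ (esF T j).support) : ¬e ≤ S.sqfreeExp := by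
  obtain ⟨J, hJ, rfl⟩ := exists_eq_sqfreeExp_of_mem_support_esF he
  rw [mem_powersetCard] at hJ
  rw [sqfreeExp_le_sqfreeExp_iff]
  intro hJS
  have := card_le_card (subset_inter hJ.1 hJS)
  omega

end ElementarySymmetric

section LevelSum

variable {N : ℕ} (W S : Finset (Fin N))

def levelSum (r : ℕ) : MvPolynomial (Fin N) ℚ :=
  ∑ J ∈ powersetCard #S W with #(S \ J) = r, ∏ j ∈ J, X j

variable {W S}

theorem sum_esF_filter_card_sdiff_eq (hSW : S ⊆ W) (r : ℕ) :
    ∑ T ∈ powersetCard (#S + 1) W with #(S \ T) = r, esF T #S =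
      (#(W \ S) - r) • levelSum W S r + (r + 1) • levelSum W S (r + 1) := by
  calc ∑ T ∈ powersetCard (#S + 1) W with #(S \ T) = r, esF T #S
      = ∑ T ∈ powersetCard (#S + 1) W, ∑ J ∈ powersetCard #S T,
          if #(S \ T) = r then ∏ j ∈ J, X j else 0 := by
        rw [sum_filter]
        refine sum_congr rfl fun T _ => ?_
        split_ifs <;> simp [esF]
    _ = ∑ J ∈ powersetCard #S W, ∑ j ∈ W \ J,
          if #(S \ insert j J) = r then ∏ i ∈ J, X i else 0 :=
        sum_powersetCard_succ_sum_powersetCard W #S _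
    _ = ∑ J ∈ powersetCard #S W, ((if #(S \ J) = r then #(W \ S) - r else 0) +
          (if #(S \ J) = r + 1 then r + 1 else 0)) • ∏ i ∈ J, X i := by
        refine sum_congr rfl fun J hJ => ?_
        rw [mem_powersetCard] at hJ
        rw [← sum_filter, sum_const, card_filter_card_sdiff_insert_eq hSW hJ.1 hJ.2]
    _ = _ := by
        simp only [add_smul, sum_add_distrib, ite_smul, zero_smul, ← sum_filter, levelSum,
          smul_sum]

theorem levelSum_zero (hSW : S ⊆ W) : levelSum W S 0 = ∏ i ∈ S, X i := by
  have : {J ∈ powersetCard #S W | #(S \ J) = 0} = {S} := by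
    ext J
    simp only [mem_filter, mem_powersetCard, card_eq_zero, sdiff_eq_empty_iff_subset,
      mem_singleton]
    constructor
    · rintro ⟨⟨-, hJ⟩, hSJ⟩
      exact (eq_of_subset_of_card_le hSJ hJ.le).symm
    · rintro rfl
      exact ⟨⟨hSW, rfl⟩, subset_rfl⟩
  rw [levelSum, this, sum_singleton]

theorem levelSum_eq_zero_of_card_lt {r : ℕ} (hr : #S < r) : levelSum W S r = 0 := by
  refine sum_eq_zero fun J hJ => absurd (mem_filter.1 hJ).2 ?_
  have := card_le_card (sdiff_subset (s := S) (t := J))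
  omega

theorem prod_X_mem_span_esF (hSW : S ⊆ W) (hS : #S < #(W \ S)) :
    ∏ i ∈ S, X i ∈
      Ideal.span ((fun T : Finset (Fin N) => esF T #S) '' ↑(powersetCard (#S + 1) W)) := by
  set I := Ideal.span ((fun T : Finset (Fin N) => esF T #S) '' ↑(powersetCard (#S + 1) W))
  have hstep : ∀ r < #S + 1, levelSum W S (r + 1) ∈ I → levelSum W S r ∈ I := by
    intro r hr hmem
    have hrel := sum_esF_filter_card_sdiff_eq hSW r
    have hsum : ∑ T ∈ powersetCard (#S + 1) W with #(S \ T) = r, esF T #S ∈ I :=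
      Ideal.sum_mem _ fun T hT => Ideal.subset_span ⟨T, (mem_filter.1 hT).1, rfl⟩
    have hne : ((#(W \ S) - r : ℕ) : ℚ) ≠ 0 := by norm_cast; omega
    refine (Submodule.smul_mem_iff (I.restrictScalars ℚ) hne).1 ?_
    rw [Submodule.restrictScalars_mem, Nat.cast_smul_eq_nsmul]
    have := I.sub_mem hsum (I.nsmul_mem hmem (r + 1))
    rwa [hrel, add_sub_cancel_right] at this
  rw [← levelSum_zero hSW]
  exact Nat.decreasingInduction (motive := fun r _ => levelSum W S r ∈ I) hstep
    (by rw [levelSum_eq_zero_of_card_lt (Nat.lt_succ_self _)]; exact I.zero_mem) (Nat.zero_le _)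

end LevelSum

/-- The generators of `𝔟⁻`, with `z` in the role of `X₁` and `k = n - 1`. -/
def bMinusGens (N k : ℕ) (z : Fin N) : Set (MvPolynomial (Fin N) ℚ) :=
  {f | ∃ i : Fin N, f = X i ^ 2} ∪ {f | ∃ T : Finset (Fin N), z ∉ T ∧ T.card = k + 1 ∧ f = esF T k}

theorem prod_X_mem_span_bMinusGens {N k : ℕ} (hN : 2 * k + 2 ≤ N) {z : Fin N} {S : Finset (Fin N)}
    (hzS : z ∉ S) (hS : #S = k) : ∏ i ∈ S, X i ∈ Ideal.span (bMinusGens N k z) := by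
  have hSW : S ⊆ univ.erase z := fun i hi => mem_erase.2 ⟨fun h => hzS (h ▸ hi), mem_univ i⟩
  have hcard : #S < #(univ.erase z \ S) := by
    rw [card_sdiff_of_subset hSW, card_erase_of_mem (mem_univ z), card_univ, Fintype.card_fin]
    omega
  refine Ideal.span_mono ?_ (prod_X_mem_span_esF hSW hcard)
  rintro _ ⟨T, hT, rfl⟩
  rw [mem_coe, mem_powersetCard] at hT
  exact Or.inr ⟨T, fun h => (mem_erase.1 (hT.1 h)).1 rfl, by rw [hT.2, hS], by rw [hS]⟩

theorem linearForm_pow_mem_span_bMinusGens {N k : ℕ} (hN : 2 * k + 2 ≤ N) (z : Fin N)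
    (a : Fin N → ℚ) (ha : ∀ K : Finset (Fin N), z ∉ K → #K + 1 = k → a z * ∏ i ∈ K, a i = 0) :
    (∑ i, C (a i) * X i) ^ k ∈ Ideal.span (bMinusGens N k z) := by
  rw [as_sum ((∑ i, C (a i) * X i) ^ k)]
  refine Ideal.sum_mem _ fun e he => ?_
  by_cases hsq : ∃ i, 2 ≤ e i
  · obtain ⟨i, hi⟩ := hsq
    refine monomial_mem_of_le ?_ (Finsupp.single_le_iff.2 hi) _
    rw [← X_pow_eq_monomial]
    exact Ideal.subset_span (Or.inl ⟨i, rfl⟩)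
  simp only [not_exists, not_le] at hsq
  rw [← sqfreeExp_support_of_le_one fun i => Nat.le_of_lt_succ (hsq i)] at he ⊢
  set S := e.support
  rw [mem_support_iff, coeff_sqfreeExp_sum_C_mul_X_pow] at he
  have hS : #S = k := by by_contra h; exact he (if_neg h)
  rw [if_pos hS] at he
  by_cases hzS : z ∈ S
  · have hSz : #(S.erase z) + 1 = k := by rw [card_erase_add_one hzS, hS]
    rw [← mul_prod_erase S a hzS, ha (S.erase z) (notMem_erase z S) hSz, mul_zero] at he
    exact absurd rfl he
  rw [← mul_one (coeff _ _), ← C_mul_monomial, monomial_sqfreeExp]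
  exact Ideal.mul_mem_left _ _ (prod_X_mem_span_bMinusGens hN hzS hS)

theorem eq_zero_of_linearForm_pow_mem_span_bMinusGens {N k : ℕ} (z : Fin N) (a : Fin N → ℚ)
    (h : (∑ i, C (a i) * X i) ^ k ∈ Ideal.span (bMinusGens N k z)) (K : Finset (Fin N))
    (hzK : z ∉ K) (hK : #K + 1 = k) : a z * ∏ i ∈ K, a i = 0 := by
  have hgens : ∀ g ∈ bMinusGens N k z, ∀ e ∈ g.support, ¬e ≤ (insert z K).sqfreeExp := by
    rintro _ (⟨i, rfl⟩ | ⟨T, hzT, -, rfl⟩) e he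
    · rw [X_pow_eq_monomial] at he
      rw [mem_singleton.1 (support_monomial_subset he), Finsupp.single_le_iff, sqfreeExp_apply]
      split_ifs <;> omega
    · refine not_le_sqfreeExp_of_mem_support_esF ?_ he
      have : T ∩ insert z K ⊆ K := fun i hi => by
        rw [mem_inter, mem_insert] at hi
        exact hi.2.resolve_left fun h => hzT (h ▸ hi.1)
      have := card_le_card this
      omega
  have hcoeff := coeff_eq_zero_of_mem_ideal_span hgens h
  rw [coeff_sqfreeExp_sum_C_mul_X_pow, card_insert_of_notMem hzK, if_pos hK,
    prod_insert hzK] at hcoeff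
  exact (mul_eq_zero.1 hcoeff).resolve_left (Nat.cast_ne_zero.2 (Nat.multinomial_pos _ _).ne')

theorem linearForm_pow_mem_span_bMinusGens_iff {N k : ℕ} (hN : 2 * k + 2 ≤ N) (z : Fin N)
    (a : Fin N → ℚ) :
    (∑ i, C (a i) * X i) ^ k ∈ Ideal.span (bMinusGens N k z) ↔
      ∀ K : Finset (Fin N), z ∉ K → #K + 1 = k → a z * ∏ i ∈ K, a i = 0 :=
  ⟨fun h => eq_zero_of_linearForm_pow_mem_span_bMinusGens z a h,
    linearForm_pow_mem_span_bMinusGens hN z a⟩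

/-- From the proof of Theorem 6.1: description of the set Z⁻ of (n−1)-nilpotent
degree-one elements of ℬ⁻. -/
theorem stmt18 (n : ℕ) (hn : 3 ≤ n)
    (b : Ideal (MvPolynomial (Fin (2 * n)) ℚ))
    (hb : b = Ideal.span
      ({f | ∃ i : Fin (2 * n), f = X i ^ 2} ∪
       {f | ∃ T : Finset (Fin (2 * n)), (⟨0, by omega⟩ : Fin (2 * n)) ∉ T ∧ T.card = n ∧
          f = esF T (n - 1)}))
    (a : Fin (2 * n) → ℚ) :
    (∑ i, C (a i) * X i) ^ (n - 1) ∈ b ↔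
      ∀ K : Finset (Fin (2 * n)), (⟨0, by omega⟩ : Fin (2 * n)) ∉ K → K.card = n - 2 →
        a (⟨0, by omega⟩ : Fin (2 * n)) * ∏ k ∈ K, a k = 0 := by
  subst hb
  obtain ⟨k, rfl⟩ : ∃ k, n = k + 1 := ⟨n - 1, by omega⟩
  simp only [Nat.add_sub_cancel]
  exact (linearForm_pow_mem_span_bMinusGens_iff (by omega) _ a).trans
    (forall_congr' fun K => imp_congr_right fun _ => imp_congr_left (by omega))

end
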